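/- Let L₁, L₂ > 0 and let u, v, r : ℝ × ℝ × ℝ → ℝ, written as functions of (x,y,t), with u twice continuously differentiable and v, r continuously differentiable, satisfying at every point: ∂ₜu = v, ∂ₜv = ∂ₓₓu + ∂ᵧᵧu − b(u)·r, ∂ₜr = (1/2)·b(u)·v, and suppose u, v, r are all spatially periodic with periods L₁ in x and L₂ in y. Then the modified global energy E(t) = ∫_{[0,L₁]×[0,L₂]} (1/2)( v² + (∂ₓu)² + (∂ᵧu)² + 2r² ) dx dy is constant in t. -/

import Mathlib

open Real

/-- Partial derivative in the first coordinate `x`. -/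
noncomputable def px (u : ℝ × ℝ × ℝ → ℝ) : ℝ × ℝ × ℝ → ℝ :=
  fun p => deriv (fun s => u (s, p.2.1, p.2.2)) p.1

/-- Partial derivative in the second coordinate `y`. -/
noncomputable def py (u : ℝ × ℝ × ℝ → ℝ) : ℝ × ℝ × ℝ → ℝ :=
  fun p => deriv (fun s => u (p.1, s, p.2.2)) p.2.1

/-- Partial derivative in the third coordinate `t`. -/
noncomputable def pt (u : ℝ × ℝ × ℝ → ℝ) : ℝ × ℝ × ℝ → ℝ :=
  fun p => deriv (fun s => u (p.1, p.2.1, s)) p.2.2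

/-- The function `b(x) = sin x / √(2 - cos x)`. -/
noncomputable def b (x : ℝ) : ℝ := Real.sin x / Real.sqrt (2 - Real.cos x)

/-- Spatial periodicity with periods `L₁` in `x` and `L₂` in `y`. -/
def SpatiallyPeriodic (L₁ L₂ : ℝ) (w : ℝ × ℝ × ℝ → ℝ) : Prop :=
  ∀ x y t : ℝ, w (x + L₁, y, t) = w (x, y, t) ∧ w (x, y + L₂, t) = w (x, y, t)

/-!
The energy density `e = ½ (v² + (∂ₓu)² + (∂ᵧu)² + 2 r²)` obeys the local conservation law
`∂ₜe = ∂ₓ(v ∂ₓu) + ∂ᵧ(v ∂ᵧu)`: the coupling terms `-b(u) r v` and `2 r · ½ b(u) v` cancel, and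
`∂ₜ∂ₓu = ∂ₓ∂ₜu = ∂ₓv` by symmetry of second derivatives. Integrating this law in time and then over
the periodic cell, each flux term integrates to zero in its own direction, since the fluxes
are spatially periodic; continuity of everything involved lets the integrals be reordered.
-/

open MeasureTheory Function intervalIntegral

section PartialDerivatives

variable {u : ℝ × ℝ × ℝ → ℝ} {x y t : ℝ}

lemma hasDerivAt_px_fderiv (hu : DifferentiableAt ℝ u (x, y, t)) :
    HasDerivAt (fun s => u (s, y, t)) (fderiv ℝ u (x, y, t) (1, 0, 0)) x :=
  hu.hasFDerivAt.comp_hasDerivAt x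
    ((hasDerivAt_id _).prodMk ((hasDerivAt_const _ _).prodMk (hasDerivAt_const _ _)))

lemma hasDerivAt_py_fderiv (hu : DifferentiableAt ℝ u (x, y, t)) :
    HasDerivAt (fun s => u (x, s, t)) (fderiv ℝ u (x, y, t) (0, 1, 0)) y :=
  hu.hasFDerivAt.comp_hasDerivAt y
    ((hasDerivAt_const _ _).prodMk ((hasDerivAt_id _).prodMk (hasDerivAt_const _ _)))

lemma hasDerivAt_pt_fderiv (hu : DifferentiableAt ℝ u (x, y, t)) :
    HasDerivAt (fun s => u (x, y, s)) (fderiv ℝ u (x, y, t) (0, 0, 1)) t :=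
  hu.hasFDerivAt.comp_hasDerivAt t
    ((hasDerivAt_const _ _).prodMk ((hasDerivAt_const _ _).prodMk (hasDerivAt_id _)))

lemma hasDerivAt_px (hu : DifferentiableAt ℝ u (x, y, t)) :
    HasDerivAt (fun s => u (s, y, t)) (px u (x, y, t)) x :=
  (hasDerivAt_px_fderiv hu).differentiableAt.hasDerivAt

lemma hasDerivAt_py (hu : DifferentiableAt ℝ u (x, y, t)) :
    HasDerivAt (fun s => u (x, s, t)) (py u (x, y, t)) y :=
  (hasDerivAt_py_fderiv hu).differentiableAt.hasDerivAt

lemma hasDerivAt_pt (hu : DifferentiableAt ℝ u (x, y, t)) :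
    HasDerivAt (fun s => u (x, y, s)) (pt u (x, y, t)) t :=
  (hasDerivAt_pt_fderiv hu).differentiableAt.hasDerivAt

lemma px_eq_fderiv (hu : Differentiable ℝ u) : px u = fun p => fderiv ℝ u p (1, 0, 0) :=
  funext fun _ => (hasDerivAt_px_fderiv (hu _)).deriv

lemma py_eq_fderiv (hu : Differentiable ℝ u) : py u = fun p => fderiv ℝ u p (0, 1, 0) :=
  funext fun _ => (hasDerivAt_py_fderiv (hu _)).deriv

lemma pt_eq_fderiv (hu : Differentiable ℝ u) : pt u = fun p => fderiv ℝ u p (0, 0, 1) :=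
  funext fun _ => (hasDerivAt_pt_fderiv (hu _)).deriv

lemma ContDiff.fderiv_apply_const {E F : Type*} [NormedAddCommGroup E] [NormedSpace ℝ E]
    [NormedAddCommGroup F] [NormedSpace ℝ F] {f : E → F} {n : ℕ} (hf : ContDiff ℝ (n + 1) f)
    (w : E) : ContDiff ℝ n fun x => fderiv ℝ f x w :=
  (hf.fderiv_right le_rfl).clm_apply contDiff_const

lemma ContDiff.px {n : ℕ} (hu : ContDiff ℝ (n + 1) u) : ContDiff ℝ n (px u) := by
  rw [px_eq_fderiv (hu.differentiable (by simp))]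
  exact hu.fderiv_apply_const _

lemma ContDiff.py {n : ℕ} (hu : ContDiff ℝ (n + 1) u) : ContDiff ℝ n (py u) := by
  rw [py_eq_fderiv (hu.differentiable (by simp))]
  exact hu.fderiv_apply_const _

lemma fderiv_fderiv_apply_comm {E F : Type*} [NormedAddCommGroup E] [NormedSpace ℝ E]
    [NormedAddCommGroup F] [NormedSpace ℝ F] {f : E → F} (hf : ContDiff ℝ 2 f) (x v w : E) :
    fderiv ℝ (fun y => fderiv ℝ f y v) x w = fderiv ℝ (fun y => fderiv ℝ f y w) x v := by
  have hdf : DifferentiableAt ℝ (fderiv ℝ f) x :=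
    (hf.fderiv_right (m := 1) le_rfl).differentiable one_ne_zero x
  rw [fderiv_clm_apply hdf (differentiableAt_const v), fderiv_clm_apply hdf (differentiableAt_const w)]
  simpa using hf.contDiffAt.isSymmSndFDerivAt (by simp) w v

lemma pt_px_comm (hu : ContDiff ℝ 2 u) : pt (px u) = px (pt u) := by
  have hdiff : ∀ w, Differentiable ℝ fun p => fderiv ℝ u p w := fun w =>
    (hu.fderiv_apply_const (n := 1) w).differentiable one_ne_zero
  rw [px_eq_fderiv (hu.differentiable (by simp)), pt_eq_fderiv (hu.differentiable (by simp)),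
    pt_eq_fderiv (hdiff _), px_eq_fderiv (hdiff _)]
  exact funext fun p => fderiv_fderiv_apply_comm hu p _ _

lemma pt_py_comm (hu : ContDiff ℝ 2 u) : pt (py u) = py (pt u) := by
  have hdiff : ∀ w, Differentiable ℝ fun p => fderiv ℝ u p w := fun w =>
    (hu.fderiv_apply_const (n := 1) w).differentiable one_ne_zero
  rw [py_eq_fderiv (hu.differentiable (by simp)), pt_eq_fderiv (hu.differentiable (by simp)),
    pt_eq_fderiv (hdiff _), py_eq_fderiv (hdiff _)]
  exact funext fun p => fderiv_fderiv_apply_comm hu p _ _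

end PartialDerivatives

namespace SpatiallyPeriodic

variable {L₁ L₂ : ℝ} {f g : ℝ × ℝ × ℝ → ℝ}

lemma mul (hf : SpatiallyPeriodic L₁ L₂ f) (hg : SpatiallyPeriodic L₁ L₂ g) :
    SpatiallyPeriodic L₁ L₂ fun p => f p * g p := fun x y t =>
  ⟨congrArg₂ (· * ·) (hf x y t).1 (hg x y t).1, congrArg₂ (· * ·) (hf x y t).2 (hg x y t).2⟩

lemma px (hf : SpatiallyPeriodic L₁ L₂ f) : SpatiallyPeriodic L₁ L₂ (_root_.px f) := by
  refine fun x y t => ⟨?_, ?_⟩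
  · change deriv (fun s => f (s, y, t)) (x + L₁) = deriv (fun s => f (s, y, t)) x
    simp only [← deriv_comp_add_const, (hf _ y t).1]
  · change deriv (fun s => f (s, y + L₂, t)) x = deriv (fun s => f (s, y, t)) x
    simp only [(hf _ y t).2]

lemma py (hf : SpatiallyPeriodic L₁ L₂ f) : SpatiallyPeriodic L₁ L₂ (_root_.py f) := by
  refine fun x y t => ⟨?_, ?_⟩
  · change deriv (fun s => f (x + L₁, s, t)) y = deriv (fun s => f (x, s, t)) y
    simp only [(hf x _ t).1]
  · change deriv (fun s => f (x, s, t)) (y + L₂) = deriv (fun s => f (x, s, t)) y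
    simp only [← deriv_comp_add_const, (hf x _ t).2]

end SpatiallyPeriodic

section Flux

variable {L₁ L₂ : ℝ} {w : ℝ × ℝ × ℝ → ℝ}

lemma integral_px_eq_zero (hw : ContDiff ℝ 1 w) (hper : SpatiallyPeriodic L₁ L₂ w) (y t : ℝ) :
    ∫ x in (0 : ℝ)..L₁, px w (x, y, t) = 0 := by
  have hpx : Continuous (px w) := (ContDiff.px (n := 0) hw).continuous
  rw [integral_eq_sub_of_hasDerivAt (fun x _ => hasDerivAt_px (hw.differentiable one_ne_zero _))
    ((by fun_prop : Continuous fun x => px w (x, y, t)).intervalIntegrable _ _), sub_eq_zero]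
  simpa using (hper 0 y t).1

lemma integral_py_eq_zero (hw : ContDiff ℝ 1 w) (hper : SpatiallyPeriodic L₁ L₂ w) (x t : ℝ) :
    ∫ y in (0 : ℝ)..L₂, py w (x, y, t) = 0 := by
  have hpy : Continuous (py w) := (ContDiff.py (n := 0) hw).continuous
  rw [integral_eq_sub_of_hasDerivAt (fun y _ => hasDerivAt_py (hw.differentiable one_ne_zero _))
    ((by fun_prop : Continuous fun y => py w (x, y, t)).intervalIntegrable _ _), sub_eq_zero]
  simpa using (hper x 0 t).2

end Flux

section IteratedIntegrals

variable {a b c d : ℝ}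

lemma intervalIntegral_swap_of_continuous {F : ℝ → ℝ → ℝ} (hF : Continuous F.uncurry) :
    ∫ x in a..b, ∫ y in c..d, F x y = ∫ y in c..d, ∫ x in a..b, F x y :=
  intervalIntegral_intervalIntegral_swap <|
    (hF.continuousOn.integrableOn_compact (isCompact_uIcc.prod isCompact_uIcc)).mono_set
      (Set.prod_mono Set.uIoc_subset_uIcc Set.uIoc_subset_uIcc)

lemma intervalIntegral_intervalIntegral_add {F G : ℝ → ℝ → ℝ} (hF : Continuous F.uncurry)
    (hG : Continuous G.uncurry) :
    ∫ x in a..b, ∫ y in c..d, (F x y + G x y) =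
      (∫ x in a..b, ∫ y in c..d, F x y) + ∫ x in a..b, ∫ y in c..d, G x y := by
  have hF' : Continuous fun x => ∫ y in c..d, F x y :=
    continuous_parametric_intervalIntegral_of_continuous' hF _ _
  have hG' : Continuous fun x => ∫ y in c..d, G x y :=
    continuous_parametric_intervalIntegral_of_continuous' hG _ _
  rw [← integral_add (hF'.intervalIntegrable _ _) (hG'.intervalIntegrable _ _)]
  refine integral_congr fun x _ => integral_add ?_ ?_
  · exact (hF.comp (continuous_const.prodMk continuous_id)).intervalIntegrable _ _
  · exact (hG.comp (continuous_const.prodMk continuous_id)).intervalIntegrable _ _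

variable {G : ℝ × ℝ × ℝ → ℝ}

lemma integral_integral_integral_eq_zero_of_fst (hG : Continuous G)
    (h : ∀ y s, ∫ x in a..b, G (x, y, s) = 0) (t₀ t₁ : ℝ) :
    ∫ x in a..b, ∫ y in c..d, ∫ s in t₀..t₁, G (x, y, s) = 0 := by
  rw [intervalIntegral_swap_of_continuous (by fun_prop)]
  refine (integral_congr fun y _ => ?_).trans integral_zero
  rw [intervalIntegral_swap_of_continuous (F := fun x s => G (x, y, s)) (by fun_prop)]
  simp [h]

lemma integral_integral_integral_eq_zero_of_snd (hG : Continuous G)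
    (h : ∀ x s, ∫ y in c..d, G (x, y, s) = 0) (t₀ t₁ : ℝ) :
    ∫ x in a..b, ∫ y in c..d, ∫ s in t₀..t₁, G (x, y, s) = 0 := by
  refine (integral_congr fun x _ => ?_).trans integral_zero
  rw [intervalIntegral_swap_of_continuous (F := fun y s => G (x, y, s)) (by fun_prop)]
  simp [h]

end IteratedIntegrals

noncomputable def energyDensity (u v r : ℝ × ℝ × ℝ → ℝ) (p : ℝ × ℝ × ℝ) : ℝ :=
  (1/2) * ((v p)^2 + (px u p)^2 + (py u p)^2 + 2 * (r p)^2)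

noncomputable def energyFluxX (u v : ℝ × ℝ × ℝ → ℝ) (p : ℝ × ℝ × ℝ) : ℝ := v p * px u p

noncomputable def energyFluxY (u v : ℝ × ℝ × ℝ → ℝ) (p : ℝ × ℝ × ℝ) : ℝ := v p * py u p

section EnergyLaw

variable {u v r : ℝ × ℝ × ℝ → ℝ}

lemma continuous_energyDensity (hu : ContDiff ℝ 2 u) (hv : ContDiff ℝ 1 v)
    (hr : ContDiff ℝ 1 r) : Continuous (energyDensity u v r) := by
  have := (ContDiff.px (n := 1) hu).continuous
  have := (ContDiff.py (n := 1) hu).continuous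
  unfold energyDensity
  fun_prop

lemma contDiff_energyFluxX (hu : ContDiff ℝ 2 u) (hv : ContDiff ℝ 1 v) :
    ContDiff ℝ 1 (energyFluxX u v) :=
  hv.mul (ContDiff.px hu)

lemma contDiff_energyFluxY (hu : ContDiff ℝ 2 u) (hv : ContDiff ℝ 1 v) :
    ContDiff ℝ 1 (energyFluxY u v) :=
  hv.mul (ContDiff.py hu)

lemma hasDerivAt_energyDensity (hu : ContDiff ℝ 2 u) (hv : ContDiff ℝ 1 v) (hr : ContDiff ℝ 1 r)
    (h1 : ∀ p, pt u p = v p) (h2 : ∀ p, pt v p = px (px u) p + py (py u) p - b (u p) * r p)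
    (h3 : ∀ p, pt r p = (1/2) * b (u p) * v p) (x y t : ℝ) :
    HasDerivAt (fun s => energyDensity u v r (x, y, s))
      (px (energyFluxX u v) (x, y, t) + py (energyFluxY u v) (x, y, t)) t := by
  have hdv : Differentiable ℝ v := hv.differentiable one_ne_zero
  have hdpx : Differentiable ℝ (px u) := (ContDiff.px (n := 1) hu).differentiable one_ne_zero
  have hdpy : Differentiable ℝ (py u) := (ContDiff.py (n := 1) hu).differentiable one_ne_zero
  have hpt_px : pt (px u) (x, y, t) = px v (x, y, t) := by rw [pt_px_comm hu, funext h1]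
  have hpt_py : pt (py u) (x, y, t) = py v (x, y, t) := by rw [pt_py_comm hu, funext h1]
  have hpx_flux : px (energyFluxX u v) (x, y, t) =
      px v (x, y, t) * px u (x, y, t) + v (x, y, t) * px (px u) (x, y, t) :=
    ((hasDerivAt_px (hdv _)).mul (hasDerivAt_px (hdpx _))).deriv
  have hpy_flux : py (energyFluxY u v) (x, y, t) =
      py v (x, y, t) * py u (x, y, t) + v (x, y, t) * py (py u) (x, y, t) :=
    ((hasDerivAt_py (hdv _)).mul (hasDerivAt_py (hdpy _))).deriv
  refine (((((hasDerivAt_pt (hdv _)).pow 2).add ((hasDerivAt_pt (hdpx _)).pow 2)).add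
    ((hasDerivAt_pt (hdpy _)).pow 2)).add
      (((hasDerivAt_pt (hr.differentiable one_ne_zero _)).pow 2).const_mul 2)).const_mul (1/2)
    |>.congr_deriv ?_
  rw [hpx_flux, hpy_flux, hpt_px, hpt_py, h2, h3]
  ring

lemma energyDensity_eq_add_integral_flux (hu : ContDiff ℝ 2 u) (hv : ContDiff ℝ 1 v)
    (hr : ContDiff ℝ 1 r) (h1 : ∀ p, pt u p = v p)
    (h2 : ∀ p, pt v p = px (px u) p + py (py u) p - b (u p) * r p)
    (h3 : ∀ p, pt r p = (1/2) * b (u p) * v p) (x y t : ℝ) :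
    energyDensity u v r (x, y, t) = energyDensity u v r (x, y, 0) +
      ((∫ s in (0 : ℝ)..t, px (energyFluxX u v) (x, y, s)) +
        ∫ s in (0 : ℝ)..t, py (energyFluxY u v) (x, y, s)) := by
  have hint {g : ℝ × ℝ × ℝ → ℝ} (hg : Continuous g) :
      IntervalIntegrable (fun s => g (x, y, s)) volume 0 t :=
    (hg.comp (by fun_prop)).intervalIntegrable _ _
  have hgx := (ContDiff.px (n := 0) (contDiff_energyFluxX hu hv)).continuous
  have hgy := (ContDiff.py (n := 0) (contDiff_energyFluxY hu hv)).continuous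
  rw [← integral_add (hint hgx) (hint hgy),
    integral_eq_sub_of_hasDerivAt (fun s _ => hasDerivAt_energyDensity hu hv hr h1 h2 h3 x y s)
      (hint (hgx.add hgy))]
  ring

end EnergyLaw

theorem IEQ_system_modified_global_energy_conservation_general
    (L₁ L₂ : ℝ)
    (u v r : ℝ × ℝ × ℝ → ℝ)
    (hu : ContDiff ℝ 2 u) (hv : ContDiff ℝ 1 v) (hr : ContDiff ℝ 1 r)
    (h1 : ∀ p : ℝ × ℝ × ℝ, pt u p = v p)
    (h2 : ∀ p : ℝ × ℝ × ℝ,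
      pt v p = px (px u) p + py (py u) p - b (u p) * r p)
    (h3 : ∀ p : ℝ × ℝ × ℝ, pt r p = (1/2) * b (u p) * v p)
    (hpu : SpatiallyPeriodic L₁ L₂ u)
    (hpv : SpatiallyPeriodic L₁ L₂ v)
    (E : ℝ → ℝ)
    (hE : ∀ t : ℝ, E t = ∫ x in (0:ℝ)..L₁, ∫ y in (0:ℝ)..L₂,
      (1/2) * ((v (x, y, t))^2 + (px u (x, y, t))^2 + (py u (x, y, t))^2
        + 2 * (r (x, y, t))^2)) :
    ∀ t : ℝ, E t = E 0 := by
  intro t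
  have he := continuous_energyDensity hu hv hr
  have hgx := (ContDiff.px (n := 0) (contDiff_energyFluxX hu hv)).continuous
  have hgy := (ContDiff.py (n := 0) (contDiff_energyFluxY hu hv)).continuous
  have hflux_x := integral_integral_integral_eq_zero_of_fst (c := 0) (d := L₂) hgx
    (integral_px_eq_zero (contDiff_energyFluxX hu hv) (hpv.mul hpu.px)) 0 t
  have hflux_y := integral_integral_integral_eq_zero_of_snd (a := 0) (b := L₁) hgy
    (integral_py_eq_zero (contDiff_energyFluxY hu hv) (hpv.mul hpu.py)) 0 t
  calc E t = ∫ x in (0 : ℝ)..L₁, ∫ y in (0 : ℝ)..L₂, (energyDensity u v r (x, y, 0) +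
        ((∫ s in (0 : ℝ)..t, px (energyFluxX u v) (x, y, s)) +
          ∫ s in (0 : ℝ)..t, py (energyFluxY u v) (x, y, s))) := by
        rw [hE]
        exact integral_congr fun x _ => integral_congr fun y _ =>
          energyDensity_eq_add_integral_flux hu hv hr h1 h2 h3 x y t
    _ = E 0 := by
        rw [intervalIntegral_intervalIntegral_add (by fun_prop) (by fun_prop),
          intervalIntegral_intervalIntegral_add (by fun_prop) (by fun_prop), hflux_x, hflux_y,
          add_zero, add_zero, hE]
        rfl

theorem IEQ_system_modified_global_energy_conservation
    (L₁ L₂ : ℝ) (hL₁ : 0 < L₁) (hL₂ : 0 < L₂)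
    (u v r : ℝ × ℝ × ℝ → ℝ)
    (hu : ContDiff ℝ 2 u) (hv : ContDiff ℝ 1 v) (hr : ContDiff ℝ 1 r)
    (h1 : ∀ p : ℝ × ℝ × ℝ, pt u p = v p)
    (h2 : ∀ p : ℝ × ℝ × ℝ,
      pt v p = px (px u) p + py (py u) p - b (u p) * r p)
    (h3 : ∀ p : ℝ × ℝ × ℝ, pt r p = (1/2) * b (u p) * v p)
    (hpu : SpatiallyPeriodic L₁ L₂ u)
    (hpv : SpatiallyPeriodic L₁ L₂ v)
    (hpr : SpatiallyPeriodic L₁ L₂ r)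
    (E : ℝ → ℝ)
    (hE : ∀ t : ℝ, E t = ∫ x in (0:ℝ)..L₁, ∫ y in (0:ℝ)..L₂,
      (1/2) * ((v (x, y, t))^2 + (px u (x, y, t))^2 + (py u (x, y, t))^2
        + 2 * (r (x, y, t))^2)) :
    ∀ t : ℝ, E t = E 0 :=
  IEQ_system_modified_global_energy_conservation_general L₁ L₂ u v r hu hv hr h1 h2 h3 hpu hpv E hE
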